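/- arXiv:1003.1157 — 5 statements merged into one kernel-verified Lean document; each statement's English description precedes it below -/
import Mathlib

section
/- Let p be an odd prime with p ≡ 1 (mod ℓ) for an odd prime ℓ, and let s, t be integers with s² − 4p = t²D for D a fundamental discriminant. Then ℓ² divides s² − 4p if and only if ℓ² divides p + 1 − s or ℓ² divides p + 1 + s. -/
/-!
Since `ℓ ∣ p - 1`, the identity `(p + 1 - s)(p + 1 + s) = (p - 1)² - (s² - 4p)` shows that
`ℓ² ∣ s² - 4p` exactly when `ℓ²` divides the product `(p + 1 - s)(p + 1 + s)`. The two factors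
sum to `2(p + 1) ≡ 4 (mod ℓ)`, so the odd prime `ℓ` divides at most one of them, and then `ℓ²`
divides the product only if it divides that factor.
-/

theorem Prime.pow_dvd_mul_iff_of_not_dvd_add {R : Type*} [CommRing R] [IsDomain R] {q x y : R}
    (hq : Prime q) (hxy : ¬ q ∣ x + y) (n : ℕ) :
    q ^ n ∣ x * y ↔ q ^ n ∣ x ∨ q ^ n ∣ y := by
  refine ⟨fun h => ?_, fun h => h.elim (Dvd.dvd.mul_right · y) (Dvd.dvd.mul_left · x)⟩
  by_cases hx : q ∣ x
  · exact .inl (hq.pow_dvd_of_dvd_mul_right n (fun hy => hxy (dvd_add hx hy)) h)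
  · exact .inr (hq.pow_dvd_of_dvd_mul_left n hx h)

theorem Prime.sq_dvd_sq_sub_four_mul_iff {R : Type*} [CommRing R] [IsDomain R] {q a s : R}
    (hq : Prime q) (hq4 : ¬ q ∣ 4) (ha : q ∣ a - 1) :
    q ^ 2 ∣ s ^ 2 - 4 * a ↔ q ^ 2 ∣ a + 1 - s ∨ q ^ 2 ∣ a + 1 + s := by
  have hsum : ¬ q ∣ (a + 1 - s) + (a + 1 + s) := fun h =>
    hq4 <| (dvd_add_right (ha.mul_left 2)).mp (by convert h using 1; ring)
  rw [← hq.pow_dvd_mul_iff_of_not_dvd_add hsum,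
    ← dvd_sub_right (pow_dvd_pow_of_dvd ha 2)]
  ring_nf

theorem Nat.Prime.not_intCast_dvd_four_of_odd {ℓ : ℕ} (hl : ℓ.Prime) (hlodd : Odd ℓ) :
    ¬ (ℓ : ℤ) ∣ 4 := by
  intro h
  have h2 : ℓ ∣ 2 := hl.dvd_of_dvd_pow (n := 2) (by exact_mod_cast h)
  rw [(Nat.prime_dvd_prime_iff_eq hl Nat.prime_two).mp h2] at hlodd
  exact Nat.not_odd_iff_even.mpr even_two hlodd

theorem ellsq_dvd_iff_general (p ℓ : ℕ) (hl : ℓ.Prime) (hlodd : Odd ℓ)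
    (hmod : p ≡ 1 [MOD ℓ]) (s : ℤ) :
    (ℓ : ℤ) ^ 2 ∣ s ^ 2 - 4 * (p : ℤ) ↔
      ((ℓ : ℤ) ^ 2 ∣ (p : ℤ) + 1 - s ∨ (ℓ : ℤ) ^ 2 ∣ (p : ℤ) + 1 + s) := by
  have hdvd : (ℓ : ℤ) ∣ (p : ℤ) - 1 := by
    simpa using Int.modEq_iff_dvd.mp (Int.natCast_modEq_iff.mpr hmod.symm)
  exact (Nat.prime_iff_prime_int.mp hl).sq_dvd_sq_sub_four_mul_iff
    (hl.not_intCast_dvd_four_of_odd hlodd) hdvd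

/-- Let `p ≡ 1 (mod ℓ)` for distinct odd primes `p, ℓ`, and `0 < s < 2√p`. Then
`ℓ² ∣ s² − 4p` if and only if `ℓ² ∣ p + 1 − s` or `ℓ² ∣ p + 1 + s`. -/
theorem ellsq_dvd_iff (p ℓ : ℕ) (hp : p.Prime) (hl : ℓ.Prime) (hpodd : Odd p) (hlodd : Odd ℓ)
    (hne : p ≠ ℓ) (hmod : p ≡ 1 [MOD ℓ]) (s : ℤ) (hs : 0 < s) (hs2 : s ^ 2 < 4 * (p : ℤ)) :
    (ℓ : ℤ) ^ 2 ∣ s ^ 2 - 4 * (p : ℤ) ↔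
      ((ℓ : ℤ) ^ 2 ∣ (p : ℤ) + 1 - s ∨ (ℓ : ℤ) ^ 2 ∣ (p : ℤ) + 1 + s) :=
  ellsq_dvd_iff_general p ℓ hl hlodd hmod s
end

section
/- Let a₁, a₃ be elements of a field K of characteristic > 3 with a₁ ≠ 0 and a₃ ≠ 0 and a₃³(a₁³ − 27a₃) ≠ 0. Then the curve y² + a₁xy + a₃y = x³ is isomorphic over K to the curve E_t : y² + txy + t²y = x³ with t = a₁³/a₃, via the change of variables x → u²x, y → u³y with u = a₃/a₁². -/
/-- For `a₁ ≠ 0`, `a₃ ≠ 0` with `a₃³(a₁³ − 27a₃) ≠ 0` in a field of characteristic not 2 or 3,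
the curve `y² + a₁xy + a₃y = x³` is taken, by the admissible change of variables
`x → u²x, y → u³y` with `u = a₃/a₁²`, to the curve `E_t : y² + txy + t²y = x³`
with `t = a₁³/a₃`. -/
theorem change_of_variables {K : Type*} [Field K] (h2 : ringChar K ≠ 2) (h3 : ringChar K ≠ 3)
    (a1 a3 : K) (ha1 : a1 ≠ 0) (ha3 : a3 ≠ 0) (hΔ : a3 ^ 3 * (a1 ^ 3 - 27 * a3) ≠ 0) :
    (⟨Units.mk0 (a3 / a1 ^ 2) (div_ne_zero ha3 (pow_ne_zero 2 ha1)), 0, 0, 0⟩ :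
        WeierstrassCurve.VariableChange K) • (⟨a1, 0, a3, 0, 0⟩ : WeierstrassCurve K) =
      (⟨a1 ^ 3 / a3, 0, (a1 ^ 3 / a3) ^ 2, 0, 0⟩ : WeierstrassCurve K) := by
  ext <;> simp only [WeierstrassCurve.variableChange_a₁, WeierstrassCurve.variableChange_a₂,
    WeierstrassCurve.variableChange_a₃, WeierstrassCurve.variableChange_a₄,
    WeierstrassCurve.variableChange_a₆]
    <;> simp <;> field_simp <;> ring
end

section
/- Let p ≡ 1 (mod 3) be prime, ρ a character of F_p* of order 3, and E the elliptic curve y² + y = x³ over F_p. Then the trace of Frobenius of E satisfies t_p(E) = −p·[(ρ choose ρ²) + (ρ² choose ρ)], where (A choose B) denotes the normalized Jacobi sum B(−1)/p · J(A, B̄). -/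
/-- Greene's normalized Jacobi sum `(A choose B) = B(−1)/p · J(A, B̄)`. -/
noncomputable def jbinom {F : Type*} [Field F] [Fintype F] (A B : MulChar F ℂ) : ℂ :=
  B (-1) / (Fintype.card F : ℂ) * ∑ x : F, A x * B⁻¹ (1 - x)

/-!
Fibring the affine curve `y² + y = x³` over `y`, the number of its points is
`∑_y #{x | x³ = y² + y}`, and for a cubic character `ρ` the number of cube roots of `a` is
`1 + ρ(a) + ρ²(a)`: if `a = b³ ≠ 0` there are three and `ρ(a) = 1`; otherwise `ρ(a)` is a
primitive cube root of unity. The substitution `x ↦ -x` identifies `∑_y ψ(y² + y)` with the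
Jacobi sum `J(ψ, ψ)` because `ψ(-1) = 1` for `ψ` of odd order. Hence
`#E(𝔽_p) = p + 1 + J(ρ, ρ) + J(ρ², ρ²)`, while `ρ̄ = ρ²` gives `(ρ choose ρ²) = J(ρ, ρ) / p` and
`(ρ² choose ρ) = J(ρ², ρ²) / p`.
-/

open Finset Polynomial

variable {F : Type*} [Field F] [Fintype F]

lemma FiniteField.exists_isPrimitiveRoot_of_dvd_card_sub_one {n : ℕ}
    (hn : n ∣ Fintype.card F - 1) : ∃ ζ : F, IsPrimitiveRoot ζ n := by
  classical
  obtain ⟨g, hg⟩ := IsCyclic.exists_ofOrder_eq_natCard (α := Fˣ)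
  rw [Nat.card_eq_fintype_card, Fintype.card_units] at hg
  have hgen : IsPrimitiveRoot (g : F) (Fintype.card F - 1) := by
    rw [IsPrimitiveRoot.coe_units_iff, ← hg]
    exact IsPrimitiveRoot.orderOf g
  obtain ⟨k, hk⟩ := hn
  have hk0 : k ≠ 0 := by
    rintro rfl
    have := Fintype.one_lt_card (α := F)
    omega
  refine ⟨g ^ k, ?_⟩
  simpa [hk, hk0] using hgen.pow_of_dvd hk0 (Dvd.intro_left n hk.symm)

namespace MulChar

section CommMonoidWithZero

variable {R : Type*} [CommMonoidWithZero R]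

lemma apply_pow_orderOf_eq_one (χ : MulChar F R) {a : F} (ha : a ≠ 0) :
    χ a ^ orderOf χ = 1 := by
  rw [← pow_apply' χ χ.orderOf_pos.ne', pow_orderOf_eq_one, one_apply ha.isUnit]

lemma exists_pow_orderOf_eq_of_apply_eq_one (χ : MulChar F R) {a : F} (ha : a ≠ 0)
    (h : χ a = 1) : ∃ b : F, b ^ orderOf χ = a := by
  -- write `a = g ^ m` for a generator `g` of `Fˣ`; as `χ g` has the order of `χ`,
  -- `χ a = 1` forces `orderOf χ ∣ m`
  obtain ⟨g, hg⟩ := IsCyclic.exists_generator (α := Fˣ)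
  have horder : orderOf χ = orderOf (χ g) := by
    refine orderOf_eq_orderOf_iff.mpr fun k ↦ ?_
    rcases eq_or_ne k 0 with rfl | hk
    · simp
    rw [eq_iff hg, pow_apply' χ hk, one_apply_coe]
  obtain ⟨m, hm⟩ : ∃ m : ℕ, g ^ m = ha.isUnit.unit := by
    simpa [← mem_powers_iff_mem_zpowers, Submonoid.mem_powers_iff] using hg ha.isUnit.unit
  obtain ⟨c, rfl⟩ : orderOf χ ∣ m := by
    rw [horder, orderOf_dvd_iff_pow_eq_one, ← map_pow, ← Units.val_pow_eq_pow_val, hm,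
      IsUnit.unit_spec, h]
  refine ⟨(g ^ c : Fˣ), ?_⟩
  rw [← Units.val_pow_eq_pow_val, ← pow_mul, mul_comm, hm, IsUnit.unit_spec]

end CommMonoidWithZero

variable {R : Type*} [CommRing R] [IsDomain R]

lemma geom_sum_apply_eq_zero_of_apply_ne_one (χ : MulChar F R) {a : F} (ha : a ≠ 0)
    (h : χ a ≠ 1) : ∑ j ∈ range (orderOf χ), χ a ^ j = 0 := by
  have := geom_sum_mul (χ a) (orderOf χ)
  rw [apply_pow_orderOf_eq_one χ ha, sub_self] at this
  exact (mul_eq_zero.mp this).resolve_right (sub_ne_zero.mpr h)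

lemma card_pow_orderOf_eq [DecidableEq F] (χ : MulChar F R) (a : F) :
    (#{x | x ^ orderOf χ = a} : R) = ∑ j ∈ range (orderOf χ), χ a ^ j := by
  have hn := χ.orderOf_pos
  rcases eq_or_ne a 0 with rfl | ha
  · -- both sides are `1`, the right-hand one through `0 ^ 0 = 1`
    simp [hn.ne', Finset.filter_eq']
  obtain ⟨ζ, hζ⟩ :=
    FiniteField.exists_isPrimitiveRoot_of_dvd_card_sub_one χ.orderOf_dvd_card_sub_one
  have hroots : ({x | x ^ orderOf χ = a} : Finset F) = nthRootsFinset (orderOf χ) a := by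
    ext x
    simp [mem_nthRootsFinset hn]
  rw [hroots, nthRootsFinset_def, Multiset.toFinset_card_of_nodup (hζ.nthRoots_nodup ha),
    hζ.card_nthRoots]
  split_ifs with hpow
  · obtain ⟨b, rfl⟩ := hpow
    have hb : b ≠ 0 := by
      rintro rfl
      simp [hn.ne'] at ha
    simp [map_pow, apply_pow_orderOf_eq_one χ hb]
  · rw [geom_sum_apply_eq_zero_of_apply_ne_one χ ha
      fun h ↦ hpow (exists_pow_orderOf_eq_of_apply_eq_one χ ha h), Nat.cast_zero]

end MulChar

lemma jacobiSum_self_eq_mul_sum_sq_add_self {R : Type*} [CommRing R] (ψ : MulChar F R) :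
    jacobiSum ψ ψ = ψ (-1) * ∑ y : F, ψ (y ^ 2 + y) := by
  have hsq : ψ (-1) * ψ (-1) = 1 := by rw [← map_mul, neg_one_mul, neg_neg, map_one]
  rw [jacobiSum, mul_sum]
  refine Fintype.sum_equiv (Equiv.neg F) _ _ fun x ↦ ?_
  have : (-x) ^ 2 + -x = -1 * (x * (1 - x)) := by ring
  rw [Equiv.neg_apply, this, map_mul, map_mul, ← mul_assoc, hsq, one_mul]

lemma natCard_sq_add_self_eq_pow_three {R : Type*} [CommRing R] [IsDomain R]
    (χ : MulChar F R) (hχ : orderOf χ = 3) :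
    (Nat.card {P : F × F // P.2 ^ 2 + P.2 = P.1 ^ 3} : R) =
      Fintype.card F + jacobiSum χ χ + jacobiSum (χ ^ 2) (χ ^ 2) := by
  let _ : DecidableEq F := Classical.decEq F
  have hfiber : (Nat.card {P : F × F // P.2 ^ 2 + P.2 = P.1 ^ 3} : R) =
      ∑ y : F, (#{x | x ^ 3 = y ^ 2 + y} : R) := by
    have e : {P : F × F // P.2 ^ 2 + P.2 = P.1 ^ 3} ≃ Σ y : F, {x : F // x ^ 3 = y ^ 2 + y} :=
      ((Equiv.prodComm F F).subtypeEquiv fun _ ↦ eq_comm).trans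
        (Equiv.subtypeProdEquivSigmaSubtype fun y x ↦ x ^ 3 = y ^ 2 + y)
    rw [Nat.card_congr e, Nat.card_sigma]
    simp [Nat.card_eq_fintype_card, Fintype.card_subtype]
  have hcount (a : F) : (#{x | x ^ 3 = a} : R) = 1 + χ a + (χ ^ 2) a := by
    rw [← hχ, MulChar.card_pow_orderOf_eq, hχ, MulChar.pow_apply' χ two_ne_zero]
    simp [sum_range_succ]
  have hχ3 : χ ^ 3 = 1 := hχ ▸ pow_orderOf_eq_one χ
  have hsum (ψ : MulChar F R) (hψ : ψ ^ 3 = 1) : ∑ y : F, ψ (y ^ 2 + y) = jacobiSum ψ ψ := by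
    rw [jacobiSum_self_eq_mul_sum_sq_add_self,
      MulChar.val_neg_one_eq_one_of_odd_order (by decide) hψ, one_mul]
  rw [hfiber]
  simp only [hcount, sum_add_distrib, hsum χ hχ3,
    hsum (χ ^ 2) (by rw [← pow_mul, mul_comm, pow_mul, hχ3, one_pow])]
  rw [sum_const, card_univ, nsmul_one]

lemma jbinom_eq_jacobiSum_inv_div {n : ℕ} (hn : Odd n) (A : MulChar F ℂ) {B : MulChar F ℂ}
    (hB : B ^ n = 1) : jbinom A B = jacobiSum A B⁻¹ / Fintype.card F := by
  rw [jbinom, MulChar.val_neg_one_eq_one_of_odd_order hn hB, jacobiSum, one_div_mul_eq_div]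

theorem trace_frobenius_jacobi_general (p : ℕ) [Fact p.Prime]
    (ρ : MulChar (ZMod p) ℂ) (hρ : orderOf ρ = 3) :
    (((p : ℤ) + 1 -
        (1 + (Nat.card {P : ZMod p × ZMod p // P.2 ^ 2 + P.2 = P.1 ^ 3} : ℤ))) : ℂ) =
      -(p : ℂ) * (jbinom ρ (ρ ^ 2) + jbinom (ρ ^ 2) ρ) := by
  have hρ3 : ρ ^ 3 = 1 := hρ ▸ pow_orderOf_eq_one ρ
  have hρ23 : (ρ ^ 2) ^ 3 = 1 := by rw [← pow_mul, mul_comm, pow_mul, hρ3, one_pow]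
  have hinv : ρ⁻¹ = ρ ^ 2 := inv_eq_of_mul_eq_one_right (by rw [← pow_succ']; exact hρ3)
  have hsq_inv : (ρ ^ 2)⁻¹ = ρ := inv_eq_of_mul_eq_one_left (by rw [← pow_succ']; exact hρ3)
  have hp : (p : ℂ) ≠ 0 := Nat.cast_ne_zero.mpr (Fact.out : p.Prime).ne_zero
  rw [jbinom_eq_jacobiSum_inv_div (by decide) _ hρ23,
    jbinom_eq_jacobiSum_inv_div (by decide) _ hρ3, hinv, hsq_inv]
  push_cast
  rw [natCard_sq_add_self_eq_pow_three ρ hρ, ZMod.card]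
  field_simp
  ring

/-- For `p ≡ 1 (mod 3)` prime and `ρ` a cubic character of `F_p*`, the trace of Frobenius of
`E : y² + y = x³` is `t_p(E) = −p·[(ρ choose ρ²) + (ρ² choose ρ)]`. -/
theorem trace_frobenius_jacobi (p : ℕ) [Fact p.Prime] (hp3 : 3 < p) (h1 : p % 3 = 1)
    (ρ : MulChar (ZMod p) ℂ) (hρ : orderOf ρ = 3) :
    (((p : ℤ) + 1 -
        (1 + (Nat.card {P : ZMod p × ZMod p // P.2 ^ 2 + P.2 = P.1 ^ 3} : ℤ))) : ℂ) =
      -(p : ℂ) * (jbinom ρ (ρ ^ 2) + jbinom (ρ ^ 2) ρ) :=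
  trace_frobenius_jacobi_general p ρ hρ
end

section
/- If p ≡ 2 (mod 3) is a prime, then the p-th Fourier coefficient of η(3z)⁸ vanishes: b(p) = 0. -/
/-! The product `∏ (1 - q^(3m))⁸` is a power series in `q³`, so `η(3z)⁸ = q · F(q³)` is supported
on exponents `n ≡ 1 (mod 3)`; a prime `p ≡ 2 (mod 3)` is not such an exponent. -/

open Polynomial in
/-- The `n`-th Fourier coefficient of `η(3z)⁸ = q·∏_{m≥1}(1 − q^(3m))⁸`, computed as the
coefficient of `X^n` in the (stabilizing) truncated product. -/
noncomputable def etaCoeff (n : ℕ) : ℤ :=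
  ((X : Polynomial ℤ) * ∏ i ∈ Finset.Icc 1 n, ((1 : Polynomial ℤ) - X ^ (3 * i)) ^ 8).coeff n

namespace Polynomial

variable {R : Type*} [CommRing R]

theorem prod_one_sub_X_pow_mul_pow_eq_expand {ι : Type*} (s : Finset ι) (e : ι → ℕ) (q k : ℕ) :
    ∏ i ∈ s, ((1 : R[X]) - X ^ (q * e i)) ^ k = expand R q (∏ i ∈ s, ((1 : R[X]) - X ^ e i) ^ k) := by
  simp only [map_prod, map_pow, map_sub, map_one, expand_X, ← pow_mul]

theorem coeff_X_mul_expand_succ_eq_zero {q n : ℕ} (f : R[X]) (hq : 0 < q) (hn : ¬ q ∣ n) :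
    (X * expand R q f).coeff (n + 1) = 0 := by
  rw [coeff_X_mul, coeff_expand hq, if_neg hn]

end Polynomial

open Polynomial in
theorem etaCoeff_eq_zero_of_mod_three_ne_one {n : ℕ} (hn : n % 3 ≠ 1) : etaCoeff n = 0 := by
  obtain _ | m := n
  · simp [etaCoeff]
  · rw [etaCoeff, prod_one_sub_X_pow_mul_pow_eq_expand]
    exact coeff_X_mul_expand_succ_eq_zero _ (by norm_num) (by omega)

theorem etaCoeff_eq_zero_general (p : ℕ) (h2 : p % 3 = 2) : etaCoeff p = 0 :=
  etaCoeff_eq_zero_of_mod_three_ne_one (by omega)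

/-- If `p ≡ 2 (mod 3)` is prime, then the `p`-th Fourier coefficient of `η(3z)⁸` vanishes. -/
theorem etaCoeff_eq_zero (p : ℕ) (hp : p.Prime) (h2 : p % 3 = 2) : etaCoeff p = 0 :=
  etaCoeff_eq_zero_general p h2
end

section
/- Let p ≡ 1 (mod 3) be a prime and let c, d be positive integers with 4p = c² + 3d². Then the three positive integers c, (c+3d)/2 or |c−3d|/2, together with d, |c−d|/2, (c+d)/2, give exactly the solutions: the set of pairs (s,t) of positive integers with s² − 4p = −3t² is {(c,d), ((c+3d)/2, |c−d|/2), (|c−3d|/2, (c+d)/2)}. -/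
/-!
Brahmagupta's identity `(s² + 3t²)(c² + 3d²) = (sc + 3td)² + 3(sd − tc)²` drives the argument.
If `s² + 3t² = c² + 3d² = 4p`, then `p ∣ d²(s² + 3t²) − t²(c² + 3d²) = (sd − tc)(sd + tc)`;
changing the sign of `t` if necessary, `p ∣ sd − tc`, and then the identity forces
`p ∣ sc + 3td` as well, with quotients `m, k` satisfying `m² + 3k² = 16`. Thus `(s, t)` is
`(c, d)` multiplied by one of the six elements `(m + k√−3)/4` of norm one (the units of
`ℤ[(1 + √−3)/2]`), up to conjugation, and positivity of `s` and `t` leaves three of them.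
-/

theorem exists_sq_add_three_sq_eq_sixteen_of_dvd {p s t c d : ℤ} (hp : Prime p)
    (hst : s ^ 2 + 3 * t ^ 2 = 4 * p) (hcd : c ^ 2 + 3 * d ^ 2 = 4 * p)
    (hdvd : p ∣ s * d - t * c) :
    ∃ m k : ℤ, m ^ 2 + 3 * k ^ 2 = 16 ∧ 4 * s = c * m + 3 * d * k ∧ 4 * t = d * m - c * k := by
  obtain ⟨k, hk⟩ := hdvd
  have hsq : (s * c + 3 * t * d) ^ 2 = p * (p * (16 - 3 * k ^ 2)) := by
    linear_combination (c ^ 2 + 3 * d ^ 2) * hst + 4 * p * hcd - 3 * (s * d - t * c + p * k) * hk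
  obtain ⟨m, hm⟩ : p ∣ s * c + 3 * t * d := hp.dvd_of_dvd_pow (n := 2) ⟨_, hsq⟩
  have hp0 : p ≠ 0 := hp.ne_zero
  refine ⟨m, k, ?_, ?_, ?_⟩
  · refine mul_left_cancel₀ (pow_ne_zero 2 hp0) ?_
    linear_combination hsq - (s * c + 3 * t * d + p * m) * hm
  · refine mul_left_cancel₀ hp0 ?_
    linear_combination -s * hcd + c * hm + 3 * d * hk
  · refine mul_left_cancel₀ hp0 ?_
    linear_combination -t * hcd + d * hm - c * hk

theorem eq_of_sq_add_three_sq_eq_sixteen {m k : ℤ} (h : m ^ 2 + 3 * k ^ 2 = 16) :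
    (m = 4 ∧ k = 0) ∨ (m = -4 ∧ k = 0) ∨ (m = 2 ∧ k = 2) ∨ (m = 2 ∧ k = -2) ∨
      (m = -2 ∧ k = 2) ∨ (m = -2 ∧ k = -2) := by
  obtain ⟨hm₁, hm₂⟩ := abs_le_of_sq_le_sq' (by nlinarith : m ^ 2 ≤ 4 ^ 2) (by norm_num)
  obtain ⟨hk₁, hk₂⟩ := abs_lt_of_sq_lt_sq' (by nlinarith : k ^ 2 < 3 ^ 2) (by norm_num)
  interval_cases m <;> interval_cases k <;> simp_all

theorem exists_sq_add_three_sq_eq_sixteen {p s t c d : ℤ} (hp : Prime p)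
    (hst : s ^ 2 + 3 * t ^ 2 = 4 * p) (hcd : c ^ 2 + 3 * d ^ 2 = 4 * p) :
    ∃ m k : ℤ, m ^ 2 + 3 * k ^ 2 = 16 ∧ 4 * s = c * m + 3 * d * k ∧
      (4 * t = d * m - c * k ∨ 4 * t = c * k - d * m) := by
  have hdvd : p ∣ (s * d - t * c) * (s * d - -t * c) :=
    ⟨4 * (d ^ 2 - t ^ 2), by linear_combination d ^ 2 * hst - t ^ 2 * hcd⟩
  rcases hp.dvd_or_dvd hdvd with h | h
  · obtain ⟨m, k, hmk, hs, ht⟩ := exists_sq_add_three_sq_eq_sixteen_of_dvd hp hst hcd h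
    exact ⟨m, k, hmk, hs, .inl ht⟩
  · obtain ⟨m, k, hmk, hs, ht⟩ :=
      exists_sq_add_three_sq_eq_sixteen_of_dvd hp (by linear_combination hst) hcd h
    exact ⟨m, k, hmk, hs, .inr (by linear_combination -ht)⟩

theorem ne_of_sq_add_three_sq_eq_four_mul {p c d : ℤ} (hp : Prime p)
    (hcd : c ^ 2 + 3 * d ^ 2 = 4 * p) : c ≠ d := by
  rintro rfl
  exact hp.not_isSquare ⟨c, by linarith⟩

/-- Let `p ≡ 1 (mod 3)` be prime and `c, d` positive integers with `4p = c² + 3d²`. Then the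
positive integer solutions `(s,t)` of `s² − 4p = −3t²` are exactly `(c,d)`,
`((c+3d)/2, |c−d|/2)` and `(|c−3d|/2, (c+d)/2)`. -/
theorem solutions_neg_three (p : ℕ) (hp : p.Prime) (h3 : p % 3 = 1)
    (c d : ℤ) (hc : 0 < c) (hd : 0 < d) (hcd : 4 * (p : ℤ) = c ^ 2 + 3 * d ^ 2) :
    ∀ s t : ℤ, (0 < s ∧ 0 < t ∧ s ^ 2 - 4 * (p : ℤ) = -3 * t ^ 2) ↔
      ((s = c ∧ t = d) ∨ (2 * s = c + 3 * d ∧ 2 * t = |c - d|) ∨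
        (2 * s = |c - 3 * d| ∧ 2 * t = c + d)) := by
  have hpZ : Prime (p : ℤ) := Nat.prime_iff_prime_int.mp hp
  intro s t
  constructor
  · rintro ⟨hs, ht, hst⟩
    have hst' : s ^ 2 + 3 * t ^ 2 = 4 * p := by linear_combination hst
    obtain ⟨m, k, hmk, hs4, ht4⟩ := exists_sq_add_three_sq_eq_sixteen hpZ hst' hcd.symm
    have habs₁ := abs_cases (c - d)
    have habs₃ := abs_cases (c - 3 * d)
    rcases eq_of_sq_add_three_sq_eq_sixteen hmk with
        ⟨rfl, rfl⟩ | ⟨rfl, rfl⟩ | ⟨rfl, rfl⟩ | ⟨rfl, rfl⟩ | ⟨rfl, rfl⟩ | ⟨rfl, rfl⟩ <;>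
      omega
  · have hcd₁ : c ≠ d := ne_of_sq_add_three_sq_eq_four_mul hpZ hcd.symm
    have hcd₃ : c ≠ 3 * d := by
      rintro rfl
      have : (p : ℤ) = 3 * d ^ 2 := by linarith
      omega
    rintro (⟨rfl, rfl⟩ | ⟨hs, ht⟩ | ⟨hs, ht⟩)
    · exact ⟨hc, hd, by linarith⟩
    · have ht' : (2 * t) ^ 2 = (c - d) ^ 2 := by rw [ht, sq_abs]
      have : 0 < |c - d| := abs_pos.mpr (sub_ne_zero.mpr hcd₁)
      refine ⟨by linarith, by linarith, mul_left_cancel₀ four_ne_zero ?_⟩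
      linear_combination (2 * s + c + 3 * d) * hs + 3 * ht' - 4 * hcd
    · have hs' : (2 * s) ^ 2 = (c - 3 * d) ^ 2 := by rw [hs, sq_abs]
      have : 0 < |c - 3 * d| := abs_pos.mpr (sub_ne_zero.mpr hcd₃)
      refine ⟨by linarith, by linarith, mul_left_cancel₀ four_ne_zero ?_⟩
      linear_combination hs' + 3 * (2 * t + c + d) * ht - 4 * hcd
end
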